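/- Let $R$ be a commutative ring, $m \ge 1$ a fixed natural number, $a(1), \dots, a(m) \in R$ arbitrary initial values, and $p_1, \dots, p_m : \mathbb{N} \to R$ coefficient functions. Suppose the sequence $a$ satisfies the homogeneous linear recurrence $a(k) = p_1(k)\, a(k-m) + p_2(k)\, a(k-m+1) + \cdots + p_m(k)\, a(k-1)$ for all $k > m$. Then for every $k > m$, $a(k)$ equals the determinant of the $k \times k$ matrix $M$ over $R$ defined by: first row $M_{1,j} = a(j)$ for $1 \le j \le m$ and $M_{1,j} = 0$ for $m < j \le k$; subdiagonal entries $M_{c+1,c} = -1$ for $1 \le c \le k-1$; entries $M_{c-m+j,\,c} = p_j(c)$ for each column $c$ with $m+1 \le c \le k$ and each $j$ with $1 \le j \le m$ (and $c-m+j \ge 2$); and all other entries $0$. -/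

import Mathlib

/-!
Add to the first row of `M` the rows `r ≥ 2` weighted by `a(r - 1)`. In column `c` the new entry
is `a(c)` (the first-row entry when `c ≤ m`, the `p`-entries by the recurrence when `c > m`)
minus the `a(c)` contributed by the subdiagonal `-1` in row `c + 1`, which exists only for
`c < k`. So the first row becomes `a(k)` times the last unit vector, and the determinant has not
changed. Expanding along that row leaves `a(k)` times the minor of the subdiagonal, which is
triangular with diagonal `-1`; its sign cancels the cofactor sign.
-/

open Matrix Finset

section

variable {R : Type*} [CommRing R]

theorem Matrix.det_updateRow_zero_single_last {n : ℕ} (M : Matrix (Fin (n + 1)) (Fin (n + 1)) R)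
    (c : R) :
    (M.updateRow 0 (Pi.single (Fin.last n) c)).det =
      (-1) ^ n * c * (M.submatrix Fin.succ Fin.castSucc).det := by
  rw [det_succ_row_zero, Finset.sum_eq_single (Fin.last n)]
  · simp [← Fin.succAbove_zero, submatrix_updateRow_succAbove]
  · intro j _ hj
    simp [hj]
  · simp

theorem Matrix.det_submatrix_succ_castSucc_of_upperHessenberg {n : ℕ}
    (M : Matrix (Fin (n + 1)) (Fin (n + 1)) R)
    (hM : ∀ i j : Fin (n + 1), (j : ℕ) + 1 < i → M i j = 0) :
    (M.submatrix Fin.succ Fin.castSucc).det = ∏ i : Fin n, M i.succ i.castSucc := by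
  refine det_of_isUpperTriangular fun i j hji => hM _ _ ?_
  simpa using (hji : (j : ℕ) < i)

theorem sum_window_eq_of_recurrence {m : ℕ} {a : ℕ → R} {p : ℕ → ℕ → R}
    (hrec : ∀ k > m, a k = ∑ j ∈ Finset.Icc 1 m, p j k * a (k - m + j - 1))
    {j n : ℕ} (hj : j ≤ n) :
    ∑ i ∈ range n, a (i + 1) *
        (if m ≤ j ∧ j < i + 1 + m ∧ i < j then p (i + 1 + m - j) (j + 1) else 0) =
      if m ≤ j then a (j + 1) else 0 := by
  simp_rw [mul_ite, mul_zero, ← sum_filter]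
  split_ifs with hmj
  · rw [hrec (j + 1) (by omega)]
    refine sum_nbij' (fun i => i + 1 + m - j) (fun l => j - m + l - 1) ?_ ?_ ?_ ?_ ?_ <;>
      intro i hi <;> simp only [mem_filter, mem_range, mem_Icc] at hi ⊢ <;> try omega
    rw [show j + 1 - m + (i + 1 + m - j) - 1 = i + 1 by omega, mul_comm]
  · exact sum_eq_zero fun i hi => by simp only [mem_filter] at hi; omega

def recurrenceMatrix (m : ℕ) (a : ℕ → R) (p : ℕ → ℕ → R) (k : ℕ) : Matrix (Fin k) (Fin k) R :=
  Matrix.of (fun i j : Fin k =>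
    if (i : ℕ) = 0 then (if (j : ℕ) + 1 ≤ m then a ((j : ℕ) + 1) else 0)
    else if (i : ℕ) = (j : ℕ) + 1 then -1
    else if m ≤ (j : ℕ) ∧ (j : ℕ) + 1 ≤ (i : ℕ) + m ∧ (i : ℕ) ≤ (j : ℕ) then
      p ((i : ℕ) + m - (j : ℕ)) ((j : ℕ) + 1)
    else 0)

namespace recurrenceMatrix

variable (m : ℕ) (a : ℕ → R) (p : ℕ → ℕ → R) {n : ℕ}

theorem zero_apply (j : Fin (n + 1)) :
    recurrenceMatrix m a p (n + 1) 0 j = if (j : ℕ) + 1 ≤ m then a (j + 1) else 0 := by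
  simp [recurrenceMatrix]

theorem succ_apply (i : Fin n) (j : Fin (n + 1)) :
    recurrenceMatrix m a p (n + 1) i.succ j =
      (if (i : ℕ) = j then -1 else 0) +
        if m ≤ (j : ℕ) ∧ (j : ℕ) < i + 1 + m ∧ (i : ℕ) < j then p (i + 1 + m - j) (j + 1)
        else 0 := by
  simp only [recurrenceMatrix, of_apply, Fin.val_succ, Nat.add_one_ne_zero, if_false,
    Nat.add_right_cancel_iff]
  split_ifs <;> first | omega | simp

theorem isUpperHessenberg {k : ℕ} (i j : Fin k) (hij : (j : ℕ) + 1 < i) :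
    recurrenceMatrix m a p k i j = 0 := by
  simp only [recurrenceMatrix, of_apply]
  split_ifs <;> first | omega | rfl

theorem succ_castSucc (i : Fin n) : recurrenceMatrix m a p (n + 1) i.succ i.castSucc = -1 := by
  simp [succ_apply]

theorem cons_vecMul (hrec : ∀ k > m, a k = ∑ j ∈ Finset.Icc 1 m, p j k * a (k - m + j - 1)) :
    (Fin.cons 1 fun i : Fin n => a (i + 1)) ᵥ* recurrenceMatrix m a p (n + 1) =
      Pi.single (Fin.last n) (a (n + 1)) := by
  ext j
  rw [vecMul, dotProduct, Fin.sum_univ_succ]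
  simp only [Fin.cons_zero, Fin.cons_succ, one_mul, zero_apply, succ_apply, mul_add,
    sum_add_distrib]
  rw [Fin.sum_univ_eq_sum_range (fun i => a (i + 1) * (if i = j then -1 else 0)) n,
    Fin.sum_univ_eq_sum_range (fun i => a (i + 1) *
      (if m ≤ (j : ℕ) ∧ (j : ℕ) < i + 1 + m ∧ i < j then p (i + 1 + m - j) (j + 1) else 0)) n,
    sum_window_eq_of_recurrence hrec (Nat.lt_succ_iff.mp j.isLt)]
  simp only [mul_ite, mul_zero, sum_ite_eq', mem_range]
  rcases Fin.eq_castSucc_or_eq_last j with ⟨j, rfl⟩ | rfl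
  · simp only [Fin.val_castSucc, j.isLt, if_true, Pi.single_apply, Fin.castSucc_ne_last,
      if_false]
    split_ifs <;> first | omega | ring
  · simp only [Fin.val_last, lt_irrefl, if_false, Pi.single_eq_same]
    split_ifs <;> first | omega | simp

theorem det_updateRow_zero_single_last (c : R) :
    ((recurrenceMatrix m a p (n + 1)).updateRow 0 (Pi.single (Fin.last n) c)).det = c := by
  rw [Matrix.det_updateRow_zero_single_last,
    det_submatrix_succ_castSucc_of_upperHessenberg _ (isUpperHessenberg m a p)]
  simp [succ_castSucc, mul_right_comm _ c, ← mul_pow]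

end recurrenceMatrix

end

theorem linear_recurrence_as_det_general (R : Type*) [CommRing R] (m : ℕ)
    (a : ℕ → R) (p : ℕ → ℕ → R)
    (hrec : ∀ k > m, a k = ∑ j ∈ Finset.Icc 1 m, p j k * a (k - m + j - 1)) :
    ∀ k > m, a k =
      Matrix.det (Matrix.of (fun i j : Fin k =>
        if (i : ℕ) = 0 then (if (j : ℕ) + 1 ≤ m then a ((j : ℕ) + 1) else 0)
        else if (i : ℕ) = (j : ℕ) + 1 then -1
        else if m ≤ (j : ℕ) ∧ (j : ℕ) + 1 ≤ (i : ℕ) + m ∧ (i : ℕ) ≤ (j : ℕ) then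
          p ((i : ℕ) + m - (j : ℕ)) ((j : ℕ) + 1)
        else 0)) := by
  intro k hk
  obtain ⟨n, rfl⟩ : ∃ n, k = n + 1 := ⟨k - 1, by omega⟩
  change a (n + 1) = (recurrenceMatrix m a p (n + 1)).det
  have h := det_updateRow_sum (recurrenceMatrix m a p (n + 1)) 0
    (Fin.cons 1 fun i : Fin n => a (i + 1))
  rwa [← vecMul_eq_sum, recurrenceMatrix.cons_vecMul m a p hrec,
    recurrenceMatrix.det_updateRow_zero_single_last, Fin.cons_zero, one_smul] at h

/-- **Closed formula for homogeneous linear recurrences.**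
Let `R` be a commutative ring, `m ≥ 1`, `a : ℕ → R` a sequence (indexed from 1), and
`p j : ℕ → R` (for `1 ≤ j ≤ m`) coefficient functions such that
`a k = p 1 k * a (k-m) + p 2 k * a (k-m+1) + ⋯ + p m k * a (k-1)` for all `k > m`.
Then for every `k > m`, `a k` equals the determinant of the `k × k` matrix `M` (1-based
indices `r, c`) with first row `M 1 c = a c` for `c ≤ m` and `0` for `c > m`;
subdiagonal entries `M (c+1) c = -1`; entries `M (c-m+j) c = p j c` for columns
`c ≥ m+1` and `1 ≤ j ≤ m` (with row `c-m+j ≥ 2`); and all other entries `0`. -/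
theorem linear_recurrence_as_det (R : Type*) [CommRing R] (m : ℕ) (hm : 1 ≤ m)
    (a : ℕ → R) (p : ℕ → ℕ → R)
    (hrec : ∀ k > m, a k = ∑ j ∈ Finset.Icc 1 m, p j k * a (k - m + j - 1)) :
    ∀ k > m, a k =
      Matrix.det (Matrix.of (fun i j : Fin k =>
        if (i : ℕ) = 0 then (if (j : ℕ) + 1 ≤ m then a ((j : ℕ) + 1) else 0)
        else if (i : ℕ) = (j : ℕ) + 1 then -1
        else if m ≤ (j : ℕ) ∧ (j : ℕ) + 1 ≤ (i : ℕ) + m ∧ (i : ℕ) ≤ (j : ℕ) then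
          p ((i : ℕ) + m - (j : ℕ)) ((j : ℕ) + 1)
        else 0)) :=
  linear_recurrence_as_det_general R m a p hrec
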